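/- arXiv:1707.05126 — 2 statements merged into one kernel-verified Lean document; each statement's English description precedes it below -/
import Mathlib

section
/- A function f(z) = z - Σ_{n≥2} a_n z^n with a_n ≥ 0 belongs to TS*C(α,β;γ) if and only if Σ_{n≥2} (1+(n-1)γ)(n-α-(n-1)αβ) a_n ≤ 1-α. -/
/-
For `f = z - ∑ aₙ₊₂ zⁿ⁺²` the numerator `N = z f' + γ z² f''` and the denominator `D` of the
defining quotient are again of the form `z - ∑ cₙ aₙ₊₂ zⁿ⁺²` and `z - ∑ dₙ aₙ₊₂ zⁿ⁺²`, with
`0 ≤ dₙ ≤ cₙ`, and `cₙ - α dₙ` is exactly the weight of the coefficient condition.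
If `∑ (cₙ - α dₙ) aₙ₊₂ ≤ 1 - α`, then `‖N - D‖ < (1 - α) ‖D‖` on the punctured disc, which forces
`Re (N / D) > α`. Conversely, on the segment `(0, 1)` the quotient is real and `D` is positive
(it is positive near `0` and has no zero), so `N > α D` there; this reads
`∑ (cₙ - α dₙ) aₙ₊₂ tⁿ⁺² < (1 - α) t`, and letting `t → 1` gives the coefficient bound.
-/

open Metric Filter Topology Set

section PowerSeries

variable {c : ℕ → ℂ} {k : ℕ}

theorem summable_natCast_add_one_mul_pow {q : ℝ} (hq0 : 0 ≤ q) (hq1 : q < 1) :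
    Summable fun m : ℕ => ((m : ℝ) + 1) * q ^ m := by
  have hq : ‖q‖ < 1 := by rwa [Real.norm_of_nonneg hq0]
  refine ((summable_pow_mul_geometric_of_norm_lt_one 1 hq).add
    (summable_geometric_of_lt_one hq0 hq1)).congr fun m => ?_
  ring

theorem exists_summable_bound_deriv_of_summable {r s : ℝ} (hr : 0 ≤ r) (hrs : r < s)
    (hs : Summable fun n => c n * (s : ℂ) ^ (n + k + 1)) :
    ∃ u : ℕ → ℝ, Summable u ∧
      ∀ n (y : ℂ), ‖y‖ ≤ r → ‖((n + k + 1 : ℕ) : ℂ) * c n * y ^ (n + k)‖ ≤ u n := by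
  obtain ⟨C, hC⟩ := hs.tendsto_atTop_zero.norm.bddAbove_range
  have hs0 : 0 < s := hr.trans_lt hrs
  set q := r / s
  refine ⟨fun n => C / s * ((((n + k : ℕ) : ℝ) + 1) * q ^ (n + k)),
    ((summable_nat_add_iff k).mpr
      (summable_natCast_add_one_mul_pow (by positivity) ((div_lt_one hs0).mpr hrs))).mul_left _,
    fun n y hy => ?_⟩
  have hcn : ‖c n‖ * s ^ (n + k + 1) ≤ C := by
    simpa [norm_pow, Complex.norm_real, abs_of_pos hs0] using hC ⟨n, rfl⟩
  have hr_eq : r ^ (n + k) * s = q ^ (n + k) * s ^ (n + k + 1) := by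
    simp only [q, div_pow, pow_succ]; field_simp
  calc ‖((n + k + 1 : ℕ) : ℂ) * c n * y ^ (n + k)‖
      ≤ ((n + k + 1 : ℕ) : ℝ) * ‖c n‖ * r ^ (n + k) := by
        rw [norm_mul, norm_mul, norm_pow, Complex.norm_natCast]
        gcongr
    _ = ((n + k + 1 : ℕ) : ℝ) * q ^ (n + k) * (‖c n‖ * s ^ (n + k + 1)) / s := by
        rw [eq_div_iff hs0.ne']
        linear_combination ((n + k + 1 : ℕ) : ℝ) * ‖c n‖ * hr_eq
    _ ≤ ((n + k + 1 : ℕ) : ℝ) * q ^ (n + k) * C / s := by gcongr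
    _ = C / s * ((((n + k : ℕ) : ℝ) + 1) * q ^ (n + k)) := by push_cast; ring

variable {g : ℂ → ℂ}

theorem hasDerivAt_and_summable_of_forall_hasSum
    (hg : ∀ z ∈ ball (0 : ℂ) 1, HasSum (fun n => c n * z ^ (n + k + 1)) (g z))
    {z : ℂ} (hz : z ∈ ball (0 : ℂ) 1) :
    HasDerivAt g (∑' n, ((n + k + 1 : ℕ) : ℂ) * c n * z ^ (n + k)) z ∧
      Summable fun n => ((n + k + 1 : ℕ) : ℂ) * c n * z ^ (n + k) := by
  rw [mem_ball_zero_iff] at hz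
  obtain ⟨s, hzs, hs1⟩ := exists_between hz
  obtain ⟨r, hzr, hrs⟩ := exists_between hzs
  have hr0 : 0 ≤ r := (norm_nonneg z).trans hzr.le
  have hs : (s : ℂ) ∈ ball (0 : ℂ) 1 := by
    rwa [mem_ball_zero_iff, Complex.norm_real, Real.norm_of_nonneg (hr0.trans hrs.le)]
  obtain ⟨u, hu, hbound⟩ := exists_summable_bound_deriv_of_summable hr0 hrs (hg _ hs).summable
  have hzr' : z ∈ ball (0 : ℂ) r := mem_ball_zero_iff.mpr hzr
  have hderiv : HasDerivAt (fun y => ∑' n, c n * y ^ (n + k + 1))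
      (∑' n, ((n + k + 1 : ℕ) : ℂ) * c n * z ^ (n + k)) z := by
    refine hasDerivAt_tsum_of_isPreconnected hu isOpen_ball (convex_ball _ _).isPreconnected
      (fun n y _ => ?_) (fun n y hy => hbound n y (mem_ball_zero_iff.mp hy).le) hzr'
      (hg z (mem_ball_zero_iff.mpr hz)).summable hzr'
    exact ((hasDerivAt_pow _ y).const_mul (c n)).congr_deriv (by rw [Nat.add_sub_cancel]; ring)
  refine ⟨hderiv.congr_of_eventuallyEq ?_,
    Summable.of_norm_bounded hu fun n => hbound n z hzr.le⟩
  filter_upwards [isOpen_ball.mem_nhds (mem_ball_zero_iff.mpr hz)] with y hy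
  exact (hg y hy).tsum_eq.symm

theorem hasSum_deriv_of_forall_hasSum
    (hg : ∀ z ∈ ball (0 : ℂ) 1, HasSum (fun n => c n * z ^ (n + k + 1)) (g z))
    {z : ℂ} (hz : z ∈ ball (0 : ℂ) 1) :
    HasSum (fun n => ((n + k + 1 : ℕ) : ℂ) * c n * z ^ (n + k)) (deriv g z) := by
  obtain ⟨hderiv, hsum⟩ := hasDerivAt_and_summable_of_forall_hasSum hg hz
  exact hderiv.deriv ▸ hsum.hasSum

theorem differentiableAt_of_forall_hasSum
    (hg : ∀ z ∈ ball (0 : ℂ) 1, HasSum (fun n => c n * z ^ (n + k + 1)) (g z))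
    {z : ℂ} (hz : z ∈ ball (0 : ℂ) 1) : DifferentiableAt ℂ g z :=
  (hasDerivAt_and_summable_of_forall_hasSum hg hz).1.differentiableAt

end PowerSeries

theorem Complex.lt_re_div_of_norm_sub_lt {α : ℝ} {w v : ℂ} (h : ‖w - v‖ < (1 - α) * ‖v‖) :
    α < (w / v).re := by
  have hv : v ≠ 0 := by rintro rfl; simp at h; linarith [norm_nonneg w]
  have hsplit : w / v = 1 + (w - v) / v := by field_simp; ring
  have hnorm : ‖(w - v) / v‖ < 1 - α := by
    rwa [norm_div, div_lt_iff₀ (norm_pos_iff.mpr hv)]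
  rw [hsplit, add_re, one_re]
  linarith [neg_abs_le ((w - v) / v).re, abs_re_le_norm ((w - v) / v)]

theorem summable_and_tsum_le_of_forall_tsum_mul_pow_le {b : ℕ → ℝ} (hb : ∀ n, 0 ≤ b n) (k : ℕ)
    {C : ℝ} (hs : ∀ t ∈ Ioo (0 : ℝ) 1, Summable fun n => b n * t ^ (n + k))
    (h : ∀ t ∈ Ioo (0 : ℝ) 1, ∑' n, b n * t ^ (n + k) ≤ C) :
    Summable b ∧ ∑' n, b n ≤ C := by
  have hpartial : ∀ F : Finset ℕ, ∑ n ∈ F, b n ≤ C := by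
    intro F
    have hlim : Tendsto (fun t : ℝ => ∑ n ∈ F, b n * t ^ (n + k)) (𝓝[<] 1)
        (𝓝 (∑ n ∈ F, b n)) := by
      have hcont : Continuous fun t : ℝ => ∑ n ∈ F, b n * t ^ (n + k) := by fun_prop
      simpa using (hcont.tendsto 1).mono_left nhdsWithin_le_nhds
    refine le_of_tendsto hlim ?_
    filter_upwards [Ioo_mem_nhdsLT zero_lt_one] with t ht
    exact ((hs t ht).sum_le_tsum F fun n _ => mul_nonneg (hb n) (pow_nonneg ht.1.le _)).trans
      (h t ht)
  exact ⟨summable_of_sum_le hb hpartial, Real.tsum_le_of_sum_le hb hpartial⟩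

theorem tsum_mul_pow_lt_self_of_ne {d : ℕ → ℝ} (hd : ∀ n, 0 ≤ d n)
    (hs : ∀ t ∈ Ioo (0 : ℝ) 1, Summable fun n => d n * t ^ (n + 2))
    (hne : ∀ t ∈ Ioo (0 : ℝ) 1, ∑' n, d n * t ^ (n + 2) ≠ t) :
    ∀ t ∈ Ioo (0 : ℝ) 1, ∑' n, d n * t ^ (n + 2) < t := by
  have hfactor : ∀ u : ℝ, ∑' n, d n * u ^ (n + 2) = u * ∑' n, d n * u ^ (n + 1) := fun u => by
    rw [← tsum_mul_left]; congr 1; ext n; ring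
  intro t ht
  by_contra! hge
  have hsum : Summable fun n => d n * t ^ (n + 1) :=
    ((hs t ht).mul_left t⁻¹).congr fun n => by field_simp [ht.1.ne']; ring
  -- `u ↦ ∑ dₙ uⁿ⁺¹` vanishes at `0` and is `≥ 1` at `t`, so it takes the value `1` in between.
  have hcont : ContinuousOn (fun u => ∑' n, d n * u ^ (n + 1)) (Icc 0 t) :=
    continuousOn_tsum (fun n => by fun_prop) hsum fun n u hu => by
      rw [Real.norm_of_nonneg (mul_nonneg (hd n) (pow_nonneg hu.1 _))]
      exact mul_le_mul_of_nonneg_left (pow_le_pow_left₀ hu.1 hu.2 _) (hd n)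
  have hone : (1 : ℝ) ∈ Icc (∑' n, d n * (0 : ℝ) ^ (n + 1)) (∑' n, d n * t ^ (n + 1)) := by
    refine ⟨by simp, ?_⟩
    rw [hfactor] at hge
    nlinarith [ht.1]
  obtain ⟨u, hu, hu1⟩ := intermediate_value_Icc ht.1.le hcont hone
  simp only at hu1
  have hu0 : u ≠ 0 := by rintro rfl; simp at hu1
  exact hne u ⟨lt_of_le_of_ne hu.1 (Ne.symm hu0), hu.2.trans_lt ht.2⟩
    (by rw [hfactor, hu1, mul_one])

section CoefficientCriterion

variable {N D : ℂ → ℂ} {c d : ℕ → ℝ} {α : ℝ}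

theorem summable_and_eq_ofReal_of_forall_hasSum
    (hN : ∀ z ∈ ball (0 : ℂ) 1, HasSum (fun n => (c n : ℂ) * z ^ (n + 2)) (z - N z))
    {t : ℝ} (ht : |t| < 1) :
    (Summable fun n => c n * t ^ (n + 2)) ∧ N t = ((t - ∑' n, c n * t ^ (n + 2) : ℝ) : ℂ) := by
  have h : HasSum (fun n => ((c n * t ^ (n + 2) : ℝ) : ℂ)) (t - N t) :=
    (hN t (by rwa [mem_ball_zero_iff, Complex.norm_real])).congr_fun fun n => by push_cast; rfl
  have hsum := Complex.summable_ofReal.mp h.summable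
  refine ⟨hsum, ?_⟩
  have := (Complex.hasSum_ofReal.mpr hsum.hasSum).unique h
  rw [Complex.ofReal_sub]
  linear_combination this

theorem summable_and_tsum_le_of_forall_lt_re_div (hd : ∀ n, 0 ≤ d n) (hdc : ∀ n, d n ≤ c n)
    (hα0 : 0 ≤ α) (hα1 : α < 1)
    (hN : ∀ z ∈ ball (0 : ℂ) 1, HasSum (fun n => (c n : ℂ) * z ^ (n + 2)) (z - N z))
    (hD : ∀ z ∈ ball (0 : ℂ) 1, HasSum (fun n => (d n : ℂ) * z ^ (n + 2)) (z - D z))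
    (h : ∀ z ∈ ball (0 : ℂ) 1, z ≠ 0 → α < (N z / D z).re) :
    (Summable fun n => c n - α * d n) ∧ ∑' n, (c n - α * d n) ≤ 1 - α := by
  have habs : ∀ t ∈ Ioo (0 : ℝ) 1, |t| < 1 := fun t ht => abs_lt.mpr ⟨by linarith [ht.1], ht.2⟩
  have hreal : ∀ t ∈ Ioo (0 : ℝ) 1,
      ((Summable fun n => c n * t ^ (n + 2)) ∧ N t = ((t - ∑' n, c n * t ^ (n + 2) : ℝ) : ℂ)) ∧
      ((Summable fun n => d n * t ^ (n + 2)) ∧ D t = ((t - ∑' n, d n * t ^ (n + 2) : ℝ) : ℂ)) :=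
    fun t ht => ⟨summable_and_eq_ofReal_of_forall_hasSum hN (habs t ht),
      summable_and_eq_ofReal_of_forall_hasSum hD (habs t ht)⟩
  have hquot : ∀ t ∈ Ioo (0 : ℝ) 1,
      α < (t - ∑' n, c n * t ^ (n + 2)) / (t - ∑' n, d n * t ^ (n + 2)) := fun t ht => by
    have hmem : (t : ℂ) ∈ ball (0 : ℂ) 1 := by
      rw [mem_ball_zero_iff, Complex.norm_real, Real.norm_eq_abs]; exact habs t ht
    have := h t hmem (by exact_mod_cast ht.1.ne')
    rwa [(hreal t ht).1.2, (hreal t ht).2.2, ← Complex.ofReal_div, Complex.ofReal_re] at this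
  -- `D` has no zero on `(0, 1)` because `α ≥ 0` and `x / 0 = 0`.
  have hDpos := tsum_mul_pow_lt_self_of_ne hd (fun t ht => (hreal t ht).2.1) fun t ht heq => by
    have := hquot t ht
    rw [heq, sub_self, div_zero] at this
    linarith
  have hE : ∀ t ∈ Ioo (0 : ℝ) 1, HasSum (fun n => (c n - α * d n) * t ^ (n + 2))
      (∑' n, c n * t ^ (n + 2) - α * ∑' n, d n * t ^ (n + 2)) := fun t ht =>
    ((hreal t ht).1.1.hasSum.sub ((hreal t ht).2.1.hasSum.mul_left α)).congr_fun
      fun n => by ring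
  refine summable_and_tsum_le_of_forall_tsum_mul_pow_le (fun n => by nlinarith [hd n, hdc n]) 2
    (fun t ht => (hE t ht).summable) fun t ht => ?_
  have hden := sub_pos.mpr (hDpos t ht)
  have hlt := (lt_div_iff₀ hden).mp (hquot t ht)
  rw [(hE t ht).tsum_eq]
  nlinarith [ht.2]

theorem lt_re_div_of_tsum_le (hd : ∀ n, 0 ≤ d n) (hdc : ∀ n, d n ≤ c n) (hα1 : α < 1)
    (hN : ∀ z ∈ ball (0 : ℂ) 1, HasSum (fun n => (c n : ℂ) * z ^ (n + 2)) (z - N z))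
    (hD : ∀ z ∈ ball (0 : ℂ) 1, HasSum (fun n => (d n : ℂ) * z ^ (n + 2)) (z - D z))
    (hs : Summable fun n => c n - α * d n) (hle : ∑' n, (c n - α * d n) ≤ 1 - α)
    {z : ℂ} (hz : z ∈ ball (0 : ℂ) 1) (hz0 : z ≠ 0) : α < (N z / D z).re := by
  set r := ‖z‖
  have hr0 : 0 < r := norm_pos_iff.mpr hz0
  have hr1 : r < 1 := mem_ball_zero_iff.mp hz
  have hr : |r| < 1 := by rwa [abs_of_pos hr0]
  have hSc := (summable_and_eq_ofReal_of_forall_hasSum hN hr).1.hasSum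
  have hSd := (summable_and_eq_ofReal_of_forall_hasSum hD hr).1.hasSum
  set Sc := ∑' n, c n * r ^ (n + 2)
  set Sd := ∑' n, d n * r ^ (n + 2)
  have hDz : ‖z - D z‖ ≤ Sd := (hD z hz).norm_le_of_bounded hSd fun n => by
    rw [norm_mul, norm_pow, Complex.norm_real, Real.norm_of_nonneg (hd n)]
  have hND : ‖N z - D z‖ ≤ Sc - Sd := by
    have h := ((hD z hz).sub (hN z hz)).norm_le_of_bounded (hSc.sub hSd) fun n => by
      rw [← sub_mul, ← Complex.ofReal_sub, norm_mul, norm_pow, Complex.norm_real,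
        Real.norm_eq_abs, abs_sub_comm, abs_of_nonneg (sub_nonneg.mpr (hdc n)), sub_mul]
    rwa [sub_sub_sub_cancel_left] at h
  have hE : Sc - α * Sd ≤ (1 - α) * r ^ 2 := by
    have h := hasSum_le (fun n => ?_) (hSc.sub (hSd.mul_left α)) (hs.hasSum.mul_right (r ^ 2))
    · nlinarith
    · have hpow : r ^ (n + 2) ≤ r ^ 2 := pow_le_pow_of_le_one hr0.le hr1.le (by omega)
      have hcd : 0 ≤ c n - α * d n := by nlinarith [hd n, hdc n]
      nlinarith [mul_le_mul_of_nonneg_left hpow hcd]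
  have hDnorm : r - Sd ≤ ‖D z‖ := by
    have := norm_sub_norm_le z (z - D z)
    rw [sub_sub_cancel] at this
    linarith
  have hr2 : (1 - α) * r ^ 2 < (1 - α) * r :=
    mul_lt_mul_of_pos_left (by nlinarith) (sub_pos.mpr hα1)
  refine Complex.lt_re_div_of_norm_sub_lt ?_
  nlinarith [mul_le_mul_of_nonneg_left hDnorm (sub_pos.mpr hα1).le]

end CoefficientCriterion

section ClassT

variable {f : ℂ → ℂ} {b : ℕ → ℂ}

theorem hasSum_one_sub_deriv
    (hf : ∀ z ∈ ball (0 : ℂ) 1, HasSum (fun n => b n * z ^ (n + 2)) (z - f z))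
    {z : ℂ} (hz : z ∈ ball (0 : ℂ) 1) :
    HasSum (fun n : ℕ => ((n : ℂ) + 2) * b n * z ^ (n + 1)) (1 - deriv f z) := by
  have hf' : HasDerivAt (fun y => y - (y - f y)) (1 - deriv (fun y => y - f y) z) z :=
    (hasDerivAt_id' z).sub (differentiableAt_of_forall_hasSum (k := 1) hf hz).hasDerivAt
  simp only [sub_sub_cancel] at hf'
  rw [hf'.deriv, sub_sub_cancel]
  convert hasSum_deriv_of_forall_hasSum (k := 1) hf hz using 2 with n
  push_cast; ring

theorem hasSum_neg_deriv_deriv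
    (hf : ∀ z ∈ ball (0 : ℂ) 1, HasSum (fun n => b n * z ^ (n + 2)) (z - f z))
    {z : ℂ} (hz : z ∈ ball (0 : ℂ) 1) :
    HasSum (fun n : ℕ => ((n : ℂ) + 1) * ((n : ℂ) + 2) * b n * z ^ n) (-deriv (deriv f) z) := by
  have hf' : ∀ y ∈ ball (0 : ℂ) 1,
      HasSum (fun n : ℕ => ((n : ℂ) + 2) * b n * y ^ (n + 0 + 1)) (1 - deriv f y) :=
    fun y hy => hasSum_one_sub_deriv hf hy
  have h := hasSum_deriv_of_forall_hasSum (c := fun n : ℕ => ((n : ℂ) + 2) * b n) (k := 0) hf' hz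
  rw [deriv_const_sub] at h
  convert h using 2 with n
  push_cast; ring

end ClassT

-- The quotient defining `S*C(α,β;γ)` is `num γ f z / den β γ f z`.
namespace StarlikeConvex

noncomputable def num (γ : ℝ) (f : ℂ → ℂ) (z : ℂ) : ℂ :=
  z * deriv f z + (γ : ℂ) * z ^ 2 * deriv (deriv f) z

noncomputable def den (β γ : ℝ) (f : ℂ → ℂ) (z : ℂ) : ℂ :=
  (γ : ℂ) * z * (deriv f z + (β : ℂ) * z * deriv (deriv f) z) +
    (1 - (γ : ℂ)) * ((β : ℂ) * z * deriv f z + (1 - (β : ℂ)) * f z)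

def numCoeff (γ : ℝ) (n : ℕ) : ℝ := ((n : ℝ) + 2) * (1 + ((n : ℝ) + 1) * γ)

def denCoeff (β γ : ℝ) (n : ℕ) : ℝ := (1 + ((n : ℝ) + 1) * γ) * (1 + ((n : ℝ) + 1) * β)

variable {f : ℂ → ℂ} {a : ℕ → ℝ} {z : ℂ}

theorem hasSum_sub_num (γ : ℝ)
    (hf : ∀ z ∈ ball (0 : ℂ) 1, HasSum (fun n => (a (n + 2) : ℂ) * z ^ (n + 2)) (z - f z))
    (hz : z ∈ ball (0 : ℂ) 1) :
    HasSum (fun n => ((numCoeff γ n * a (n + 2) : ℝ) : ℂ) * z ^ (n + 2)) (z - num γ f z) := by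
  have hval : z - num γ f z = z * (1 - deriv f z) + γ * z ^ 2 * -deriv (deriv f) z := by
    simp only [num]; ring
  rw [hval]
  refine (((hasSum_one_sub_deriv hf hz).mul_left z).add
    ((hasSum_neg_deriv_deriv hf hz).mul_left (γ * z ^ 2))).congr_fun fun n => ?_
  simp only [numCoeff]; push_cast; ring

theorem hasSum_sub_den (β γ : ℝ)
    (hf : ∀ z ∈ ball (0 : ℂ) 1, HasSum (fun n => (a (n + 2) : ℂ) * z ^ (n + 2)) (z - f z))
    (hz : z ∈ ball (0 : ℂ) 1) :
    HasSum (fun n => ((denCoeff β γ n * a (n + 2) : ℝ) : ℂ) * z ^ (n + 2)) (z - den β γ f z) := by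
  have hval : z - den β γ f z = γ * z * (1 - deriv f z) + γ * β * z ^ 2 * -deriv (deriv f) z +
      (1 - γ) * β * z * (1 - deriv f z) + (1 - γ) * (1 - β) * (z - f z) := by
    simp only [den]; ring
  rw [hval]
  have h1 := hasSum_one_sub_deriv hf hz
  refine ((((h1.mul_left (γ * z)).add
    ((hasSum_neg_deriv_deriv hf hz).mul_left (γ * β * z ^ 2))).add
    (h1.mul_left ((1 - γ) * β * z))).add
    ((hf z hz).mul_left ((1 - (γ : ℂ)) * (1 - β)))).congr_fun fun n => ?_
  simp only [denCoeff]; push_cast; ring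

theorem denCoeff_nonneg {β γ : ℝ} (hβ : 0 ≤ β) (hγ : 0 ≤ γ) (n : ℕ) : 0 ≤ denCoeff β γ n := by
  unfold denCoeff; positivity

theorem denCoeff_le_numCoeff {β γ : ℝ} (hβ : β ≤ 1) (hγ : 0 ≤ γ) (n : ℕ) :
    denCoeff β γ n ≤ numCoeff γ n := by
  unfold denCoeff numCoeff
  rw [mul_comm]
  gcongr ?_ * _
  nlinarith

end StarlikeConvex

theorem stmt3_general (α β γ : ℝ) (hα0 : 0 ≤ α) (hα1 : α < 1) (hβ0 : 0 ≤ β) (hβ1 : β < 1)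
    (hγ0 : 0 ≤ γ) (f : ℂ → ℂ) (a : ℕ → ℝ) (ha : ∀ n, 0 ≤ a n)
    (hf : ∀ z ∈ Metric.ball (0 : ℂ) 1,
      HasSum (fun n : ℕ => ((a (n + 2) : ℝ) : ℂ) * z ^ (n + 2)) (z - f z)) :
    (∀ z ∈ Metric.ball (0 : ℂ) 1, z ≠ 0 →
      α < (((z * deriv f z + (γ : ℂ) * z ^ 2 * deriv (deriv f) z) /
        ((γ : ℂ) * z * (deriv f z + (β : ℂ) * z * deriv (deriv f) z) +
          (1 - (γ : ℂ)) * ((β : ℂ) * z * deriv f z + (1 - (β : ℂ)) * f z))).re)) ↔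
    (Summable (fun n : ℕ =>
      (1 + ((n : ℝ) + 1) * γ) * (((n : ℝ) + 2) - α - ((n : ℝ) + 1) * α * β) * a (n + 2)) ∧
    ∑' n : ℕ,
      (1 + ((n : ℝ) + 1) * γ) * (((n : ℝ) + 2) - α - ((n : ℝ) + 1) * α * β) * a (n + 2)
        ≤ 1 - α) := by
  have hN := fun z (hz : z ∈ ball (0 : ℂ) 1) => StarlikeConvex.hasSum_sub_num γ hf hz
  have hD := fun z (hz : z ∈ ball (0 : ℂ) 1) => StarlikeConvex.hasSum_sub_den β γ hf hz
  have hd n : 0 ≤ StarlikeConvex.denCoeff β γ n * a (n + 2) :=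
    mul_nonneg (StarlikeConvex.denCoeff_nonneg hβ0 hγ0 n) (ha _)
  have hdc n :
      StarlikeConvex.denCoeff β γ n * a (n + 2) ≤ StarlikeConvex.numCoeff γ n * a (n + 2) :=
    mul_le_mul_of_nonneg_right (StarlikeConvex.denCoeff_le_numCoeff hβ1.le hγ0 n) (ha _)
  have hcoeff : (fun n : ℕ =>
      (1 + ((n : ℝ) + 1) * γ) * (((n : ℝ) + 2) - α - ((n : ℝ) + 1) * α * β) * a (n + 2)) =
      fun n => StarlikeConvex.numCoeff γ n * a (n + 2) -
        α * (StarlikeConvex.denCoeff β γ n * a (n + 2)) := by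
    ext n; simp only [StarlikeConvex.numCoeff, StarlikeConvex.denCoeff]; ring
  rw [hcoeff]
  exact ⟨summable_and_tsum_le_of_forall_lt_re_div hd hdc hα0 hα1 hN hD,
    fun ⟨hs, hle⟩ z hz hz0 => lt_re_div_of_tsum_le hd hdc hα1 hN hD hs hle hz hz0⟩

theorem stmt3 (α β γ : ℝ) (hα0 : 0 ≤ α) (hα1 : α < 1) (hβ0 : 0 ≤ β) (hβ1 : β < 1)
    (hγ0 : 0 ≤ γ) (hγ1 : γ ≤ 1) (f : ℂ → ℂ) (a : ℕ → ℝ) (ha : ∀ n, 0 ≤ a n)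
    (hf : ∀ z ∈ Metric.ball (0 : ℂ) 1,
      HasSum (fun n : ℕ => ((a (n + 2) : ℝ) : ℂ) * z ^ (n + 2)) (z - f z)) :
    (∀ z ∈ Metric.ball (0 : ℂ) 1, z ≠ 0 →
      α < (((z * deriv f z + (γ : ℂ) * z ^ 2 * deriv (deriv f) z) /
        ((γ : ℂ) * z * (deriv f z + (β : ℂ) * z * deriv (deriv f) z) +
          (1 - (γ : ℂ)) * ((β : ℂ) * z * deriv f z + (1 - (β : ℂ)) * f z))).re)) ↔
    (Summable (fun n : ℕ =>
      (1 + ((n : ℝ) + 1) * γ) * (((n : ℝ) + 2) - α - ((n : ℝ) + 1) * α * β) * a (n + 2)) ∧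
    ∑' n : ℕ,
      (1 + ((n : ℝ) + 1) * γ) * (((n : ℝ) + 2) - α - ((n : ℝ) + 1) * α * β) * a (n + 2)
        ≤ 1 - α) :=
  stmt3_general α β γ hα0 hα1 hβ0 hβ1 hγ0 f a ha hf
end

section
/- If f(z) = z - Σ_{n≥2} a_n z^n (a_n ≥ 0) belongs to TS*C(α,β;γ), then for every n ≥ 2, a_n ≤ (1-α)/[(1+(n-1)γ)(n-α-(n-1)αβ)]. -/
/-!
The operators giving the numerator `N = z f' + γ z² f''` and the denominator `D` of the defining
quotient act on `zⁿ` as multiplication by `numCoeff γ n = n (1 + (n-1)γ)` and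
`denCoeff β γ n = (1 + (n-1)γ)(1 + (n-1)β)`, so on `0 < r < 1` both are real power series.
The denominator `D` is continuous with `D(r) ~ r` at `0`, and it cannot vanish on `(0, 1)`: there
the quotient would be `x / 0 = 0 ≤ α`. So `D > 0` on `(0, 1)`. Hence `N(r) - α D(r) > 0`, that is
`∑_{n ≥ 2} (numCoeff γ n - α denCoeff β γ n) aₙ rⁿ < (1 - α) r`. All these terms are nonnegative,
so each is below `(1 - α) r`, and `r → 1` gives the bound because
`numCoeff γ n - α denCoeff β γ n = (1 + (n-1)γ)(n - α - (n-1)αβ)`.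
-/

open Complex FormalMultilinearSeries Metric Filter Topology Set
open scoped NNReal ENNReal

section PowerSeries

variable {𝕜 : Type*} [RCLike 𝕜] {f : 𝕜 → 𝕜} {c : ℕ → 𝕜}

theorem hasFPowerSeriesOnBall_ofScalars_of_hasSum {R : ℝ≥0} (hR : 0 < R)
    (hf : ∀ z ∈ ball (0 : 𝕜) R, HasSum (fun n => c n * z ^ n) (f z)) :
    HasFPowerSeriesOnBall f (ofScalars 𝕜 c) 0 R where
  r_le := by
    refine ENNReal.le_of_forall_nnreal_lt fun r hr => ?_
    have hz : ((r : ℝ) : 𝕜) ∈ ball (0 : 𝕜) R := by simpa using hr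
    refine (ofScalars 𝕜 c).le_radius_of_tendsto (l := 0) ?_
    simpa [ofScalars_norm] using (hf _ hz).summable.tendsto_atTop_zero.norm
  r_pos := by simpa using hR
  hasSum hy := by simpa [ofScalars_apply_eq, mul_comm] using hf _ (by simpa using hy)

variable {R : ℝ≥0∞} {z : 𝕜}

theorem HasFPowerSeriesOnBall.hasSum_ofScalars (h : HasFPowerSeriesOnBall f (ofScalars 𝕜 c) 0 R)
    (hz : ‖z‖ₑ < R) : HasSum (fun n => c n * z ^ n) (f z) := by
  simpa [ofScalars_apply_eq, mul_comm] using h.hasSum (by simpa using hz)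

theorem HasFPowerSeriesOnBall.deriv_ofScalars {x : 𝕜}
    (h : HasFPowerSeriesOnBall f (ofScalars 𝕜 c) x R) :
    HasFPowerSeriesOnBall (deriv f) (ofScalars 𝕜 fun n => (n + 1) * c (n + 1)) x R := by
  convert (ContinuousLinearMap.apply 𝕜 𝕜 (1 : 𝕜)).comp_hasFPowerSeriesOnBall h.fderiv
  · rfl
  · ext n
    simp

theorem HasFPowerSeriesOnBall.hasSum_mul_deriv (h : HasFPowerSeriesOnBall f (ofScalars 𝕜 c) 0 R)
    (hz : ‖z‖ₑ < R) : HasSum (fun n => n * c n * z ^ n) (z * deriv f z) := by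
  rw [← hasSum_nat_add_iff' 1, Finset.sum_range_one, Nat.cast_zero, zero_mul, zero_mul, sub_zero]
  exact ((h.deriv_ofScalars.hasSum_ofScalars hz).mul_left z).congr_fun fun n => by
    push_cast
    ring

theorem HasFPowerSeriesOnBall.hasSum_sq_mul_deriv_deriv
    (h : HasFPowerSeriesOnBall f (ofScalars 𝕜 c) 0 R) (hz : ‖z‖ₑ < R) :
    HasSum (fun n => n * (n - 1) * c n * z ^ n) (z ^ 2 * deriv (deriv f) z) := by
  rw [← hasSum_nat_add_iff' 1, Finset.sum_range_one, Nat.cast_zero, zero_mul, zero_mul, zero_mul,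
    sub_zero, sq, mul_assoc]
  exact ((h.deriv_ofScalars.hasSum_mul_deriv hz).mul_left z).congr_fun fun n => by
    push_cast
    ring

end PowerSeries

theorem Complex.hasSum_re_of_hasSum_ofReal_mul_pow {u : ℕ → ℝ} {r : ℝ} {w : ℂ}
    (h : HasSum (fun n => (u n : ℂ) * (r : ℂ) ^ n) w) :
    HasSum (fun n => u n * r ^ n) w.re ∧ (w.re : ℂ) = w := by
  obtain ⟨hre, him⟩ := (Complex.hasSum_iff _ _).mp h
  simp only [← ofReal_pow, ← ofReal_mul, ofReal_re, ofReal_im] at hre him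
  exact ⟨hre, Complex.ext rfl (by simpa using hasSum_zero.unique him)⟩

theorem eventually_lt_of_hasDerivAt_pos {g : ℝ → ℝ} {g' x : ℝ} (hg : HasDerivAt g g' x)
    (hg' : 0 < g') : ∀ᶠ y in 𝓝[>] x, g x < g y := by
  have hslope := (hasDerivWithinAt_iff_tendsto_slope' self_notMem_Ioi).mp
    (hg.hasDerivWithinAt (s := Ioi x))
  filter_upwards [hslope.eventually (lt_mem_nhds hg'), self_mem_nhdsWithin] with y hy hxy
  rw [slope_def_field] at hy
  exact sub_pos.mp ((div_pos_iff_of_pos_right (sub_pos.mpr hxy)).mp hy)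

theorem le_of_forall_mem_Ioo_mul_pow_le {x y : ℝ} {m : ℕ}
    (h : ∀ r ∈ Ioo (0 : ℝ) 1, x * r ^ m ≤ y * r) : x ≤ y := by
  have hx : Tendsto (fun r : ℝ => x * r ^ m) (𝓝[<] 1) (𝓝 x) :=
    ((continuous_const.mul (continuous_pow m)).tendsto' 1 x (by simp)).mono_left
      nhdsWithin_le_nhds
  have hy : Tendsto (fun r : ℝ => y * r) (𝓝[<] 1) (𝓝 y) :=
    ((continuous_const.mul continuous_id).tendsto' 1 y (by simp)).mono_left nhdsWithin_le_nhds
  exact le_of_tendsto_of_tendsto hx hy (mem_of_superset (Ioo_mem_nhdsLT zero_lt_one) h)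

theorem IsPreconnected.pos_of_ne_zero {X : Type*} [TopologicalSpace X] {s : Set X} {g : X → ℝ}
    (hs : IsPreconnected s) (hg : ContinuousOn g s) (hne : ∀ x ∈ s, g x ≠ 0) {x₀ : X}
    (hx₀ : x₀ ∈ s) (hpos : 0 < g x₀) :
    ∀ x ∈ s, 0 < g x := by
  intro x hx
  by_contra! hneg
  obtain ⟨y, hy, hy0⟩ := hs.intermediate_value hx hx₀ hg ⟨hneg, hpos.le⟩
  exact hne y hy hy0

theorem neg_lt_of_hasSum_pos {T : ℕ → ℝ} {S : ℝ} (h : HasSum T S) (hS : 0 < S) {i : ℕ}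
    (hT : ∀ n ≠ i, T n ≤ 0) {m : ℕ} (hm : m ≠ i) : -T m < T i := by
  have := sum_le_hasSum {i, m} (fun n hn => ?_) h.neg
  · rw [Finset.sum_pair hm.symm] at this
    linarith
  · simp only [Finset.mem_insert, Finset.mem_singleton, not_or] at hn
    exact neg_nonneg.mpr (hT n hn.1)

section ClassTSC

/-- The Taylor coefficients of `z - ∑_{n ≥ 2} aₙ zⁿ`; `a 0` and `a 1` do not enter. -/
def taylorCoeff (a : ℕ → ℝ) (n : ℕ) : ℝ := if n = 1 then 1 else if 2 ≤ n then -a n else 0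

@[simp]
theorem taylorCoeff_zero (a : ℕ → ℝ) : taylorCoeff a 0 = 0 := rfl

@[simp]
theorem taylorCoeff_one (a : ℕ → ℝ) : taylorCoeff a 1 = 1 := rfl

theorem taylorCoeff_of_two_le {a : ℕ → ℝ} {n : ℕ} (hn : 2 ≤ n) : taylorCoeff a n = -a n := by
  simp [taylorCoeff, hn, show n ≠ 1 by omega]

noncomputable def numerator (f : ℂ → ℂ) (γ : ℝ) (z : ℂ) : ℂ :=
  z * deriv f z + (γ : ℂ) * z ^ 2 * deriv (deriv f) z

noncomputable def denominator (f : ℂ → ℂ) (β γ : ℝ) (z : ℂ) : ℂ :=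
  (γ : ℂ) * z * (deriv f z + (β : ℂ) * z * deriv (deriv f) z) +
    (1 - (γ : ℂ)) * ((β : ℂ) * z * deriv f z + (1 - (β : ℂ)) * f z)

def numCoeff (γ : ℝ) (n : ℕ) : ℝ := n * (1 + (n - 1) * γ)

def denCoeff (β γ : ℝ) (n : ℕ) : ℝ := (1 + (n - 1) * γ) * (1 + (n - 1) * β)

variable {α β γ : ℝ} {f : ℂ → ℂ} {a : ℕ → ℝ}

theorem numCoeff_sub_mul_denCoeff (n : ℕ) :
    numCoeff γ n - α * denCoeff β γ n = (1 + (n - 1) * γ) * (n - α - (n - 1) * α * β) := by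
  unfold numCoeff denCoeff
  ring

theorem numCoeff_sub_mul_denCoeff_pos (hα0 : 0 ≤ α) (hα1 : α < 1) (hβ1 : β < 1) (hγ0 : 0 ≤ γ)
    {n : ℕ} (hn : 1 ≤ n) : 0 < numCoeff γ n - α * denCoeff β γ n := by
  have hn' : (1 : ℝ) ≤ n := by exact_mod_cast hn
  rw [numCoeff_sub_mul_denCoeff]
  have hαβ : α * β ≤ α := by nlinarith
  apply mul_pos <;> nlinarith

theorem hasFPowerSeriesOnBall_taylorCoeff
    (hf : ∀ z ∈ ball (0 : ℂ) 1,
      HasSum (fun n : ℕ => ((a (n + 2) : ℝ) : ℂ) * z ^ (n + 2)) (z - f z)) :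
    HasFPowerSeriesOnBall f (ofScalars ℂ fun n => (taylorCoeff a n : ℂ)) 0 1 := by
  refine hasFPowerSeriesOnBall_ofScalars_of_hasSum (R := 1) one_pos fun z hz => ?_
  rw [← hasSum_nat_add_iff' 2]
  simpa [taylorCoeff, Finset.sum_range_succ] using (hf z (by simpa using hz)).neg

theorem hasSum_numerator
    (hF : HasFPowerSeriesOnBall f (ofScalars ℂ fun n => (taylorCoeff a n : ℂ)) 0 1)
    {z : ℂ} (hz : z ∈ ball (0 : ℂ) 1) :
    HasSum (fun n => ((numCoeff γ n * taylorCoeff a n : ℝ) : ℂ) * z ^ n) (numerator f γ z) := by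
  replace hz : ‖z‖ₑ < 1 := by simpa [← ofReal_norm] using hz
  have h := (hF.hasSum_mul_deriv hz).add ((hF.hasSum_sq_mul_deriv_deriv hz).mul_left (γ : ℂ))
  rw [numerator, mul_assoc (γ : ℂ)]
  refine h.congr_fun fun n => ?_
  simp only [numCoeff]
  push_cast
  ring

theorem hasSum_denominator
    (hF : HasFPowerSeriesOnBall f (ofScalars ℂ fun n => (taylorCoeff a n : ℂ)) 0 1)
    {z : ℂ} (hz : z ∈ ball (0 : ℂ) 1) :
    HasSum (fun n => ((denCoeff β γ n * taylorCoeff a n : ℝ) : ℂ) * z ^ n)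
      (denominator f β γ z) := by
  replace hz : ‖z‖ₑ < 1 := by simpa [← ofReal_norm] using hz
  have h := ((hF.hasSum_mul_deriv hz).add
    ((hF.hasSum_sq_mul_deriv_deriv hz).mul_left (β : ℂ))).mul_left (γ : ℂ) |>.add
    ((((hF.hasSum_mul_deriv hz).mul_left (β : ℂ)).add
      ((hF.hasSum_ofScalars hz).mul_left (1 - β : ℂ))).mul_left (1 - γ : ℂ))
  have hval : denominator f β γ z = γ * (z * deriv f z + β * (z ^ 2 * deriv (deriv f) z)) +
      (1 - γ) * (β * (z * deriv f z) + (1 - β) * f z) := by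
    unfold denominator
    ring
  rw [hval]
  refine h.congr_fun fun n => ?_
  simp only [denCoeff]
  push_cast
  ring

theorem denominator_re_pos
    (hF : HasFPowerSeriesOnBall f (ofScalars ℂ fun n => (taylorCoeff a n : ℂ)) 0 1) (hα0 : 0 ≤ α)
    (hre : ∀ z ∈ ball (0 : ℂ) 1, z ≠ 0 → α < (numerator f γ z / denominator f β γ z).re) :
    ∀ r ∈ Ioo (0 : ℝ) 1, 0 < (denominator f β γ r).re := by
  have hD := hasFPowerSeriesOnBall_ofScalars_of_hasSum (R := 1) one_pos fun z hz =>
    hasSum_denominator (β := β) (γ := γ) hF (by simpa using hz)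
  have hmem : ∀ r ∈ Ioo (0 : ℝ) 1, (r : ℂ) ∈ ball (0 : ℂ) 1 := fun r hr => by
    simpa [abs_of_pos hr.1] using hr.2
  have hcont : ContinuousOn (fun r : ℝ => (denominator f β γ r).re) (Ioo 0 1) :=
    continuous_re.comp_continuousOn (hD.continuousOn.comp continuous_ofReal.continuousOn
      fun r hr => by simpa [← ofReal_norm] using hmem r hr)
  have hderiv : HasDerivAt (fun r : ℝ => (denominator f β γ r).re) 1 0 := by
    have := hD.hasFPowerSeriesAt.hasDerivAt.real_of_complex (z := 0)
    simpa [denCoeff] using this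
  have hzero : (denominator f β γ (0 : ℝ)).re = 0 := by
    rw [ofReal_zero, ← hD.hasFPowerSeriesAt.coeff_zero fun _ => 0]
    simp
  have hne : ∀ r ∈ Ioo (0 : ℝ) 1, (denominator f β γ r).re ≠ 0 := by
    intro r hr h0
    have hreal := (Complex.hasSum_re_of_hasSum_ofReal_mul_pow
      (hasSum_denominator (β := β) (γ := γ) hF (hmem r hr))).2
    have := hre r (hmem r hr) (by exact_mod_cast hr.1.ne')
    rw [← hreal, h0, ofReal_zero, div_zero, zero_re] at this
    linarith
  obtain ⟨x₀, hlt, hx₀⟩ :=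
    ((eventually_lt_of_hasDerivAt_pos hderiv one_pos).and (Ioo_mem_nhdsGT one_pos)).exists
  exact isPreconnected_Ioo.pos_of_ne_zero hcont hne hx₀ (hzero ▸ hlt)

theorem coeff_mul_pow_le
    (hF : HasFPowerSeriesOnBall f (ofScalars ℂ fun n => (taylorCoeff a n : ℂ)) 0 1)
    (hα0 : 0 ≤ α) (hα1 : α < 1) (hβ1 : β < 1) (hγ0 : 0 ≤ γ)
    (ha : ∀ n, 0 ≤ a n)
    (hre : ∀ z ∈ ball (0 : ℂ) 1, z ≠ 0 → α < (numerator f γ z / denominator f β γ z).re)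
    {n : ℕ} (hn : 2 ≤ n) {r : ℝ} (hr : r ∈ Ioo 0 1) :
    (numCoeff γ n - α * denCoeff β γ n) * a n * r ^ n ≤ (1 - α) * r := by
  have hz : (r : ℂ) ∈ ball (0 : ℂ) 1 := by simpa [abs_of_pos hr.1] using hr.2
  obtain ⟨hN, hNr⟩ := Complex.hasSum_re_of_hasSum_ofReal_mul_pow (hasSum_numerator (γ := γ) hF hz)
  obtain ⟨hD, hDr⟩ :=
    Complex.hasSum_re_of_hasSum_ofReal_mul_pow (hasSum_denominator (β := β) (γ := γ) hF hz)
  have hlt : α < (numerator f γ r).re / (denominator f β γ r).re := by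
    have := hre r hz (by exact_mod_cast hr.1.ne')
    rwa [← hNr, ← hDr, ← ofReal_div, ofReal_re] at this
  have hS : 0 < (numerator f γ r).re - α * (denominator f β γ r).re := by
    rw [lt_div_iff₀ (denominator_re_pos hF hα0 hre r hr)] at hlt
    linarith
  have hT : HasSum (fun k => (numCoeff γ k - α * denCoeff β γ k) * taylorCoeff a k * r ^ k)
      ((numerator f γ r).re - α * (denominator f β γ r).re) :=
    (hN.sub (hD.mul_left α)).congr_fun fun k => by ring
  have hnonpos : ∀ k ≠ 1, (numCoeff γ k - α * denCoeff β γ k) * taylorCoeff a k * r ^ k ≤ 0 := by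
    intro k hk
    rcases Nat.lt_or_ge k 2 with hk2 | hk2
    · obtain rfl : k = 0 := by omega
      simp
    · have hpos := numCoeff_sub_mul_denCoeff_pos hα0 hα1 hβ1 hγ0 (by omega : 1 ≤ k)
      rw [taylorCoeff_of_two_le hk2, mul_neg, neg_mul, neg_nonpos]
      have := ha k
      have := pow_pos hr.1 k
      positivity
  have := neg_lt_of_hasSum_pos hT hS hnonpos (m := n) (by omega)
  have h1 : numCoeff γ 1 - α * denCoeff β γ 1 = 1 - α := by simp [numCoeff, denCoeff]
  rw [h1, taylorCoeff_one, taylorCoeff_of_two_le hn] at this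
  linarith

end ClassTSC

theorem stmt4_general (α β γ : ℝ) (hα0 : 0 ≤ α) (hα1 : α < 1) (hβ1 : β < 1)
    (hγ0 : 0 ≤ γ) (f : ℂ → ℂ) (a : ℕ → ℝ) (ha : ∀ n, 0 ≤ a n)
    (hf : ∀ z ∈ Metric.ball (0 : ℂ) 1,
      HasSum (fun n : ℕ => ((a (n + 2) : ℝ) : ℂ) * z ^ (n + 2)) (z - f z))
    (hre : ∀ z ∈ Metric.ball (0 : ℂ) 1, z ≠ 0 →
      α < (((z * deriv f z + (γ : ℂ) * z ^ 2 * deriv (deriv f) z) /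
        ((γ : ℂ) * z * (deriv f z + (β : ℂ) * z * deriv (deriv f) z) +
          (1 - (γ : ℂ)) * ((β : ℂ) * z * deriv f z + (1 - (β : ℂ)) * f z))).re)) :
    ∀ n : ℕ, 2 ≤ n →
      a n ≤ (1 - α) /
        ((1 + ((n : ℝ) - 1) * γ) * ((n : ℝ) - α - ((n : ℝ) - 1) * α * β)) := by
  intro n hn
  have hF := hasFPowerSeriesOnBall_taylorCoeff hf
  rw [← numCoeff_sub_mul_denCoeff, le_div_iff₀
    (numCoeff_sub_mul_denCoeff_pos hα0 hα1 hβ1 hγ0 (by omega)), mul_comm]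
  exact le_of_forall_mem_Ioo_mul_pow_le fun r hr =>
    coeff_mul_pow_le hF hα0 hα1 hβ1 hγ0 ha hre hn hr

theorem stmt4 (α β γ : ℝ) (hα0 : 0 ≤ α) (hα1 : α < 1) (hβ0 : 0 ≤ β) (hβ1 : β < 1)
    (hγ0 : 0 ≤ γ) (hγ1 : γ ≤ 1) (f : ℂ → ℂ) (a : ℕ → ℝ) (ha : ∀ n, 0 ≤ a n)
    (hf : ∀ z ∈ Metric.ball (0 : ℂ) 1,
      HasSum (fun n : ℕ => ((a (n + 2) : ℝ) : ℂ) * z ^ (n + 2)) (z - f z))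
    (hre : ∀ z ∈ Metric.ball (0 : ℂ) 1, z ≠ 0 →
      α < (((z * deriv f z + (γ : ℂ) * z ^ 2 * deriv (deriv f) z) /
        ((γ : ℂ) * z * (deriv f z + (β : ℂ) * z * deriv (deriv f) z) +
          (1 - (γ : ℂ)) * ((β : ℂ) * z * deriv f z + (1 - (β : ℂ)) * f z))).re)) :
    ∀ n : ℕ, 2 ≤ n →
      a n ≤ (1 - α) /
        ((1 + ((n : ℝ) - 1) * γ) * ((n : ℝ) - α - ((n : ℝ) - 1) * α * β)) :=
  stmt4_general α β γ hα0 hα1 hβ1 hγ0 f a ha hf hre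
end
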